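/- arXiv:2602.03763 — 4 statements merged into one kernel-verified Lean document; each statement's English description precedes it below -/
import Mathlib

section
/- Suppose L v = λ v with λ ≠ 0. Set v_d = λ⁻¹ • (Ld v) and v_u = λ⁻¹ • (Lu v). Then v = v_d + v_u, Ld v_d = λ v_d, Lu v_d = 0, Lu v_u = λ v_u, and Ld v_u = 0. In other words, every eigenvector of the weighted Hodge Laplacian with nonzero eigenvalue is a sum of a vector in the λ-eigenspace of Ld and a vector in the λ-eigenspace of Lu (either of which may be zero). -/
open Matrix

/-- Suppose `L v = μ v` with `μ ≠ 0`.  Set `vd = μ⁻¹ • (Ld v)` and `vu = μ⁻¹ • (Lu v)`.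
Then `v = vd + vu`, `Ld vd = μ vd`, `Lu vd = 0`, `Lu vu = μ vu`, and `Ld vu = 0`: every
eigenvector of the weighted Hodge Laplacian with nonzero eigenvalue is a sum of a vector in
the `μ`-eigenspace of `Ld` and a vector in the `μ`-eigenspace of `Lu` (either possibly zero).
Here `m`, `n`, `p` play the roles of `n₋`, `n`, `n₊`, and `wm`, `wn`, `wp` are the diagonals
of the weight matrices `W₋`, `W`, `W₊`. -/
theorem hodge_eigenvector_splits
    {m n p : ℕ}
    (B₁ : Matrix (Fin m) (Fin n) ℝ) (B₂ : Matrix (Fin n) (Fin p) ℝ)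
    (wm : Fin m → ℝ) (wn : Fin n → ℝ) (wp : Fin p → ℝ)
    (hwm : ∀ i, 0 < wm i) (hwn : ∀ i, 0 < wn i) (hwp : ∀ i, 0 < wp i)
    (hB : B₁ * B₂ = 0)
    (Ld Lu L : Matrix (Fin n) (Fin n) ℝ)
    (hLd : Ld = B₁ᵀ * (Matrix.diagonal wm)⁻¹ * B₁ * Matrix.diagonal wn)
    (hLu : Lu = (Matrix.diagonal wn)⁻¹ * B₂ * Matrix.diagonal wp * B₂ᵀ)
    (hL : L = Ld + Lu)
    (v : Fin n → ℝ) (μ : ℝ) (hμ : μ ≠ 0) (hv : L *ᵥ v = μ • v)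
    (vd vu : Fin n → ℝ)
    (hvd : vd = μ⁻¹ • (Ld *ᵥ v)) (hvu : vu = μ⁻¹ • (Lu *ᵥ v)) :
    v = vd + vu ∧ Ld *ᵥ vd = μ • vd ∧ Lu *ᵥ vd = 0 ∧
      Lu *ᵥ vu = μ • vu ∧ Ld *ᵥ vu = 0 := by
  have hBT : B₂ᵀ * B₁ᵀ = 0 := by
    rw [← Matrix.transpose_mul, hB, Matrix.transpose_zero]
  have hud : Lu * Ld = 0 := by
    rw [hLu, hLd]
    calc ((Matrix.diagonal wn)⁻¹ * B₂ * Matrix.diagonal wp * B₂ᵀ) *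
        (B₁ᵀ * (Matrix.diagonal wm)⁻¹ * B₁ * Matrix.diagonal wn)
        = (Matrix.diagonal wn)⁻¹ * B₂ * Matrix.diagonal wp * (B₂ᵀ * B₁ᵀ) *
          ((Matrix.diagonal wm)⁻¹ * B₁ * Matrix.diagonal wn) := by
          simp only [Matrix.mul_assoc]
      _ = 0 := by rw [hBT]; simp
  have hWn : Matrix.diagonal wn * (Matrix.diagonal wn)⁻¹ = (1 : Matrix (Fin n) (Fin n) ℝ) := by
    apply Matrix.mul_nonsing_inv
    rw [Matrix.det_diagonal]
    exact isUnit_iff_ne_zero.2 (Finset.prod_ne_zero_iff.2 fun i _ => (hwn i).ne')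
  have hdu : Ld * Lu = 0 := by
    rw [hLd, hLu]
    calc (B₁ᵀ * (Matrix.diagonal wm)⁻¹ * B₁ * Matrix.diagonal wn) *
        ((Matrix.diagonal wn)⁻¹ * B₂ * Matrix.diagonal wp * B₂ᵀ)
        = B₁ᵀ * (Matrix.diagonal wm)⁻¹ * B₁ *
            (Matrix.diagonal wn * (Matrix.diagonal wn)⁻¹) *
            (B₂ * (Matrix.diagonal wp * B₂ᵀ)) := by
          simp only [Matrix.mul_assoc]
      _ = B₁ᵀ * (Matrix.diagonal wm)⁻¹ * (B₁ * B₂) * (Matrix.diagonal wp * B₂ᵀ) := by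
          rw [hWn]; simp only [Matrix.mul_one, Matrix.mul_assoc]
      _ = 0 := by rw [hB]; simp
  have hsum : Ld *ᵥ v + Lu *ᵥ v = μ • v := by
    rw [← Matrix.add_mulVec, ← hL, hv]
  have h1 : v = vd + vu := by
    rw [hvd, hvu, ← smul_add, hsum, smul_smul, inv_mul_cancel₀ hμ, one_smul]
  have hLuLdv : Lu *ᵥ (Ld *ᵥ v) = 0 := by
    rw [Matrix.mulVec_mulVec, hud, Matrix.zero_mulVec]
  have hLdLuv : Ld *ᵥ (Lu *ᵥ v) = 0 := by
    rw [Matrix.mulVec_mulVec, hdu, Matrix.zero_mulVec]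
  have hLdLdv : Ld *ᵥ (Ld *ᵥ v) = μ • (Ld *ᵥ v) := by
    have : Ld *ᵥ (Ld *ᵥ v + Lu *ᵥ v) = Ld *ᵥ (μ • v) := by rw [hsum]
    rwa [Matrix.mulVec_add, hLdLuv, add_zero, Matrix.mulVec_smul] at this
  have hLuLuv : Lu *ᵥ (Lu *ᵥ v) = μ • (Lu *ᵥ v) := by
    have : Lu *ᵥ (Ld *ᵥ v + Lu *ᵥ v) = Lu *ᵥ (μ • v) := by rw [hsum]
    rwa [Matrix.mulVec_add, hLuLdv, zero_add, Matrix.mulVec_smul] at this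
  refine ⟨h1, ?_, ?_, ?_, ?_⟩
  · rw [hvd, Matrix.mulVec_smul, hLdLdv, smul_comm]
  · rw [hvd, Matrix.mulVec_smul, hLuLdv, smul_zero]
  · rw [hvu, Matrix.mulVec_smul, hLuLuv, smul_comm]
  · rw [hvu, Matrix.mulVec_smul, hLdLuv, smul_zero]
end

section
/- Every nonzero eigenvalue of the weighted Hodge Laplacian is an eigenvalue of the weighted down Laplacian or of the weighted up Laplacian: if λ ≠ 0 and there exists v ≠ 0 with L v = λ v, then there exists w ≠ 0 with Ld w = λ w or Lu w = λ w. -/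
open Matrix

/-- Every nonzero eigenvalue of the weighted Hodge Laplacian is an eigenvalue of the weighted
down Laplacian or of the weighted up Laplacian: if `μ ≠ 0` and there exists `v ≠ 0` with
`L v = μ v`, then there exists `u ≠ 0` with `Ld u = μ u` or `Lu u = μ u`.
Here `m`, `n`, `p` play the roles of `n₋`, `n`, `n₊`, and `wm`, `wn`, `wp` are the diagonals
of the weight matrices `W₋`, `W`, `W₊`. -/
theorem hodge_nonzero_eigenvalue_of_up_or_down
    {m n p : ℕ}
    (B₁ : Matrix (Fin m) (Fin n) ℝ) (B₂ : Matrix (Fin n) (Fin p) ℝ)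
    (wm : Fin m → ℝ) (wn : Fin n → ℝ) (wp : Fin p → ℝ)
    (hwm : ∀ i, 0 < wm i) (hwn : ∀ i, 0 < wn i) (hwp : ∀ i, 0 < wp i)
    (hB : B₁ * B₂ = 0)
    (Ld Lu L : Matrix (Fin n) (Fin n) ℝ)
    (hLd : Ld = B₁ᵀ * (Matrix.diagonal wm)⁻¹ * B₁ * Matrix.diagonal wn)
    (hLu : Lu = (Matrix.diagonal wn)⁻¹ * B₂ * Matrix.diagonal wp * B₂ᵀ)
    (hL : L = Ld + Lu)
    (μ : ℝ) (hμ : μ ≠ 0) (v : Fin n → ℝ) (hv : v ≠ 0) (hev : L *ᵥ v = μ • v) :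
    ∃ u : Fin n → ℝ, u ≠ 0 ∧ (Ld *ᵥ u = μ • u ∨ Lu *ᵥ u = μ • u) := by
  have h0 : B₂ᵀ * B₁ᵀ = 0 := by rw [← Matrix.transpose_mul, hB, Matrix.transpose_zero]
  have hLuLd : Lu * Ld = 0 := by
    rw [hLu, hLd]
    simp only [Matrix.mul_assoc]
    rw [← Matrix.mul_assoc B₂ᵀ B₁ᵀ, h0]
    simp
  rw [hL, Matrix.add_mulVec] at hev
  by_cases hLv : Lu *ᵥ v = 0
  · refine ⟨v, hv, Or.inl ?_⟩
    rw [hLv, add_zero] at hev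
    exact hev
  · refine ⟨Lu *ᵥ v, hLv, Or.inr ?_⟩
    have : Lu *ᵥ (Ld *ᵥ v + Lu *ᵥ v) = Lu *ᵥ (μ • v) := by rw [hev]
    rw [Matrix.mulVec_add, Matrix.mulVec_mulVec, hLuLd, Matrix.zero_mulVec, zero_add,
      Matrix.mulVec_smul] at this
    exact this
end

section
/- If α ∈ ℝ^{n₋} solves the down-level normal equation B₁ * W * B₁ᵀ * α = B₁ * W *ᵥ s and β ∈ ℝ^{n₊} solves the up-level normal equation B₂ᵀ * W⁻¹ * B₂ * W₊ *ᵥ β = B₂ᵀ *ᵥ s, then the residual h = s − B₁ᵀ *ᵥ α − (W⁻¹ * B₂ * W₊) *ᵥ β is harmonic: L h = 0. -/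
open Matrix

/-- If `α` solves the down-level normal equation `B₁ W B₁ᵀ α = B₁ W s` and `β` solves the
up-level normal equation `B₂ᵀ W⁻¹ B₂ W₊ β = B₂ᵀ s`, then the residual
`h = s − B₁ᵀ α − W⁻¹ B₂ W₊ β` is harmonic: `L h = 0`.
Here `m`, `n`, `p` play the roles of `n₋`, `n`, `n₊`, and `wm`, `wn`, `wp` are the diagonals
of the weight matrices `W₋`, `W`, `W₊`. -/
theorem normal_equations_residual_harmonic
    {m n p : ℕ}
    (B₁ : Matrix (Fin m) (Fin n) ℝ) (B₂ : Matrix (Fin n) (Fin p) ℝ)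
    (wm : Fin m → ℝ) (wn : Fin n → ℝ) (wp : Fin p → ℝ)
    (hwm : ∀ i, 0 < wm i) (hwn : ∀ i, 0 < wn i) (hwp : ∀ i, 0 < wp i)
    (hB : B₁ * B₂ = 0)
    (Ld Lu L : Matrix (Fin n) (Fin n) ℝ)
    (hLd : Ld = B₁ᵀ * (Matrix.diagonal wm)⁻¹ * B₁ * Matrix.diagonal wn)
    (hLu : Lu = (Matrix.diagonal wn)⁻¹ * B₂ * Matrix.diagonal wp * B₂ᵀ)
    (hL : L = Ld + Lu)
    (s : Fin n → ℝ) (α : Fin m → ℝ) (β : Fin p → ℝ)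
    (hα : (B₁ * Matrix.diagonal wn * B₁ᵀ) *ᵥ α = (B₁ * Matrix.diagonal wn) *ᵥ s)
    (hβ : (B₂ᵀ * (Matrix.diagonal wn)⁻¹ * B₂ * Matrix.diagonal wp) *ᵥ β = B₂ᵀ *ᵥ s) :
    L *ᵥ (s - B₁ᵀ *ᵥ α - ((Matrix.diagonal wn)⁻¹ * B₂ * Matrix.diagonal wp) *ᵥ β) = 0 := by
  set h := s - B₁ᵀ *ᵥ α - ((Matrix.diagonal wn)⁻¹ * B₂ * Matrix.diagonal wp) *ᵥ β with hh
  have hinv : Matrix.diagonal wn * (Matrix.diagonal wn)⁻¹ = 1 := by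
    apply Matrix.mul_nonsing_inv
    rw [Matrix.det_diagonal]
    exact isUnit_iff_ne_zero.mpr (Finset.prod_ne_zero_iff.mpr fun i _ => (hwn i).ne')
  have hz : B₁ * Matrix.diagonal wn * ((Matrix.diagonal wn)⁻¹ * B₂ * Matrix.diagonal wp) = 0 := by
    calc B₁ * Matrix.diagonal wn * ((Matrix.diagonal wn)⁻¹ * B₂ * Matrix.diagonal wp)
        = B₁ * (Matrix.diagonal wn * (Matrix.diagonal wn)⁻¹) * B₂ * Matrix.diagonal wp := by
          simp only [Matrix.mul_assoc]
      _ = 0 := by rw [hinv, Matrix.mul_one, hB, Matrix.zero_mul]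
  have h1 : (B₁ * Matrix.diagonal wn) *ᵥ h = 0 := by
    rw [hh, sub_sub, Matrix.mulVec_sub, Matrix.mulVec_add, Matrix.mulVec_mulVec,
      Matrix.mulVec_mulVec, hz, Matrix.zero_mulVec, add_zero,
      ← hα, sub_self]
  have h2 : B₂ᵀ *ᵥ h = 0 := by
    have hBt : B₂ᵀ * B₁ᵀ = 0 := by
      rw [← Matrix.transpose_mul, hB, Matrix.transpose_zero]
    rw [hh, sub_sub, Matrix.mulVec_sub, Matrix.mulVec_add, Matrix.mulVec_mulVec,
      Matrix.mulVec_mulVec, hBt, Matrix.zero_mulVec, zero_add,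
      ← Matrix.mul_assoc, ← Matrix.mul_assoc, hβ, sub_self]
  rw [hL, Matrix.add_mulVec, hLd, hLu,
    Matrix.mul_assoc (B₁ᵀ * (Matrix.diagonal wm)⁻¹), ← Matrix.mulVec_mulVec,
    h1, Matrix.mulVec_zero, ← Matrix.mulVec_mulVec, h2, Matrix.mulVec_zero, add_zero]
end

section
/- Trace formula for the kernel-shifted inverse: let M be a real symmetric positive semidefinite n×n matrix and K an n×m real matrix with orthonormal columns (Kᵀ K = I_m) satisfying M * K = 0 and such that every v ∈ ℝⁿ with M v = 0 lies in the column space of K. Let λ₁, …, λₙ denote the eigenvalues of M (with multiplicity). Then trace((M + K Kᵀ)⁻¹) = m + Σ_{i : λᵢ ≠ 0} λᵢ⁻¹; in particular trace((M + K Kᵀ)⁻¹) − m equals the sum of the reciprocals of the nonzero eigenvalues of M (the trace of the Moore–Penrose pseudoinverse of M). -/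
open Matrix

/-- Trace formula for the kernel-shifted inverse: if `M` is a real symmetric positive
semidefinite `n × n` matrix and `K` is an `n × m` matrix with orthonormal columns
(`Kᵀ K = 1`) satisfying `M K = 0`, and every `v` with `M v = 0` lies in the column space of
`K`, then `trace((M + K Kᵀ)⁻¹) = m + Σ_{i : λᵢ ≠ 0} λᵢ⁻¹`, where `λ₁, …, λₙ` are the
eigenvalues of `M` (with multiplicity), so that `trace((M + K Kᵀ)⁻¹) − m` is the trace of
the Moore–Penrose pseudoinverse of `M`. -/
theorem kernel_shift_trace_inverse
    {n m : ℕ}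
    (M : Matrix (Fin n) (Fin n) ℝ) (K : Matrix (Fin n) (Fin m) ℝ)
    (hM : M.IsHermitian) (hMpsd : M.PosSemidef)
    (hK : Kᵀ * K = 1) (hMK : M * K = 0)
    (hker : ∀ v : Fin n → ℝ, M *ᵥ v = 0 → ∃ c : Fin m → ℝ, v = K *ᵥ c) :
    ((M + K * Kᵀ)⁻¹).trace =
      (m : ℝ) + ∑ i ∈ Finset.univ.filter (fun i => hM.eigenvalues i ≠ 0),
        (hM.eigenvalues i)⁻¹ := by
  set U : Matrix (Fin n) (Fin n) ℝ := (hM.eigenvectorUnitary : Matrix (Fin n) (Fin n) ℝ) with hU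
  set lam : Fin n → ℝ := hM.eigenvalues with hlam
  have hUU : star U * U = 1 := Unitary.coe_star_mul_self hM.eigenvectorUnitary
  have hUU' : U * star U = 1 := Unitary.coe_mul_star_self hM.eigenvectorUnitary
  set chi : Fin n → ℝ := fun i => if lam i = 0 then 1 else 0 with hchi
  -- K * Kᵀ acts on eigenvectors as the indicator of zero eigenvalue
  have hact : ∀ j, (K * Kᵀ) *ᵥ ⇑(hM.eigenvectorBasis j) = chi j • ⇑(hM.eigenvectorBasis j) := by
    intro j
    have hev := hM.mulVec_eigenvectorBasis j
    by_cases h0 : lam j = 0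
    · have hz : M *ᵥ ⇑(hM.eigenvectorBasis j) = 0 := by
        rw [hev, show hM.eigenvalues j = 0 from h0, zero_smul]
      obtain ⟨c, hc⟩ := hker _ hz
      rw [hc, hchi]
      simp only [h0, if_pos, if_true]
      rw [one_smul]
      simp only [mulVec_mulVec]
      rw [Matrix.mul_assoc, hK, Matrix.mul_one]
    · have hMT : Mᵀ = M := by
        ext a b
        have h := congrFun (congrFun hM a) b
        simpa [conjTranspose_apply] using h
      have hKM : Kᵀ * M = 0 := by
        have := congrArg transpose hMK
        rwa [transpose_mul, hMT, transpose_zero] at this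
      have hKv : Kᵀ *ᵥ ⇑(hM.eigenvectorBasis j) = 0 := by
        have h1 : Kᵀ *ᵥ (M *ᵥ ⇑(hM.eigenvectorBasis j)) = 0 := by
          rw [mulVec_mulVec, hKM, zero_mulVec]
        rw [hev, mulVec_smul] at h1
        exact (smul_eq_zero.mp h1).resolve_left h0
      rw [← mulVec_mulVec, hKv, mulVec_zero, hchi]
      simp [h0]
  -- hence K * Kᵀ = U * diagonal chi * Uᴴ
  have hKKU : (K * Kᵀ) * U = U * diagonal chi := by
    ext i j
    have : (fun k => U k j) = ⇑(hM.eigenvectorBasis j) := by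
      funext k
      exact hM.eigenvectorUnitary_apply k j
    calc ((K * Kᵀ) * U) i j = ((K * Kᵀ) *ᵥ fun k => U k j) i := by
          simp [mul_apply, mulVec, dotProduct]
      _ = (chi j • ⇑(hM.eigenvectorBasis j)) i := by rw [this, hact]
      _ = (U * diagonal chi) i j := by
          rw [mul_diagonal]
          simp [Pi.smul_apply, smul_eq_mul, this.symm, mul_comm]
  have hKK : K * Kᵀ = U * diagonal chi * star U := by
    calc K * Kᵀ = (K * Kᵀ) * (U * star U) := by rw [hUU', mul_one]
      _ = ((K * Kᵀ) * U) * star U := by rw [mul_assoc]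
      _ = U * diagonal chi * star U := by rw [hKKU]
  -- the shifted matrix
  set f : Fin n → ℝ := fun i => lam i + chi i with hf
  have hMspec : M = U * diagonal lam * star U := by
    have := hM.spectral_theorem
    simpa [hU, hlam] using this
  have hsum : M + K * Kᵀ = U * diagonal f * star U := by
    rw [hMspec, hKK, ← add_mul, ← mul_add, ← diagonal_add]
  have hfne : ∀ i, f i ≠ 0 := by
    intro i
    have hnn : 0 ≤ lam i := hMpsd.eigenvalues_nonneg i
    by_cases h0 : lam i = 0
    · simp [hf, hchi, h0]
    · have : 0 < lam i := lt_of_le_of_ne hnn (Ne.symm h0)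
      simp only [hf, hchi, h0, if_neg, if_false, add_zero]
      exact h0
  -- inverse formula
  have hinv : (M + K * Kᵀ)⁻¹ = U * diagonal (fun i => (f i)⁻¹) * star U := by
    apply inv_eq_right_inv
    rw [hsum]
    simp only [Matrix.mul_assoc]
    rw [← Matrix.mul_assoc (star U) U, hUU, Matrix.one_mul,
      ← Matrix.mul_assoc (diagonal f), diagonal_mul_diagonal]
    have : (fun i => f i * (f i)⁻¹) = fun _ => (1 : ℝ) := by
      funext i; exact mul_inv_cancel₀ (hfne i)
    rw [this, diagonal_one, Matrix.one_mul, hUU']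
  -- trace computations
  have htr : ((M + K * Kᵀ)⁻¹).trace = ∑ i, (f i)⁻¹ := by
    rw [hinv, trace_mul_cycle, hUU, Matrix.one_mul, trace_diagonal]
  have hm : (m : ℝ) = ∑ i, chi i := by
    have h1 : (K * Kᵀ).trace = (Kᵀ * K).trace := trace_mul_comm K Kᵀ
    rw [hK, trace_one] at h1
    have h2 : (K * Kᵀ).trace = ∑ i, chi i := by
      rw [hKK, trace_mul_cycle, hUU, Matrix.one_mul, trace_diagonal]
    rw [← h2, h1]
    simp
  rw [htr, hm, Finset.sum_filter, ← Finset.sum_add_distrib]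
  apply Finset.sum_congr rfl
  intro i _
  by_cases h0 : lam i = 0 <;> simp [hf, hchi, h0]
end
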